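/- Let Y be a real random variable and f, g real numbers (predictions), and suppose E[Y⁴] < ∞. Then for every σ > 0, |E[ℓ_σ(Y − a)] − E[(Y − a)²]| ≤ E[(Y − a)⁴]/(2σ²) for any real a. In particular, if Y has mean m and E[(Y−m)⁴] ≤ M, then the minimizer over a of E[ℓ_σ(Y−a)] has excess squared loss E[(Y−a)²] − E[(Y−m)²] at most of order M/σ² as σ → ∞. -/

import Mathlib

/-!
Write `u = t²/σ²`. Then `t² − ℓ_σ(t) = σ²(e^{−u} − (1 − u))`, and the alternating Taylor
bounds `1 − u ≤ e^{−u} ≤ 1 − u + u²/2` for `u ≥ 0` squeeze this between `0` and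
`σ²u²/2 = t⁴/(2σ²)`. Integrating against the law of `Y − a` gives the risk comparison, and for a
minimiser `a` of the correntropy risk,
`E(Y−a)² − E(Y−m)² ≤ (E(Y−a)² − Eℓ_σ(Y−a)) + (Eℓ_σ(Y−m) − E(Y−m)²) ≤ E(Y−a)⁴/(2σ²) + 0`.
-/

open MeasureTheory

noncomputable def corrLoss (σ t : ℝ) : ℝ := σ^2 * (1 - Real.exp (-t^2 / σ^2))

lemma Real.exp_neg_le_one_sub_add_sq_div_two {x : ℝ} (hx : 0 ≤ x) :
    Real.exp (-x) ≤ 1 - x + x ^ 2 / 2 := by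
  rw [Real.exp_neg, inv_le_iff_one_le_mul₀' (Real.exp_pos x)]
  -- `(1 - x + x²/2)(1 + x + x²/2) = 1 + x⁴/4`
  nlinarith [Real.quadratic_le_exp_of_nonneg hx, pow_nonneg hx 4, sq_nonneg (x - 1)]

lemma corrLoss_eq (σ t : ℝ) : corrLoss σ t = σ ^ 2 * (1 - Real.exp (-(t ^ 2 / σ ^ 2))) := by
  rw [corrLoss, neg_div]

lemma continuous_corrLoss (σ : ℝ) : Continuous (corrLoss σ) := by
  unfold corrLoss; fun_prop

lemma corrLoss_nonneg (σ t : ℝ) : 0 ≤ corrLoss σ t := by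
  rw [corrLoss_eq]
  have : Real.exp (-(t ^ 2 / σ ^ 2)) ≤ 1 := Real.exp_le_one_iff.2 (by simp; positivity)
  nlinarith [sq_nonneg σ]

lemma corrLoss_le_sq (σ t : ℝ) : corrLoss σ t ≤ t ^ 2 := by
  rcases eq_or_ne σ 0 with rfl | hσ
  · simp [corrLoss]; positivity
  calc corrLoss σ t ≤ σ ^ 2 * (t ^ 2 / σ ^ 2) := by
        rw [corrLoss_eq]
        gcongr
        linarith [Real.one_sub_le_exp_neg (t ^ 2 / σ ^ 2)]
    _ = t ^ 2 := mul_div_cancel₀ _ (pow_ne_zero 2 hσ)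

lemma sq_sub_corrLoss_le {σ : ℝ} (hσ : σ ≠ 0) (t : ℝ) :
    t ^ 2 - corrLoss σ t ≤ t ^ 4 / (2 * σ ^ 2) := by
  have hσ2 : σ ^ 2 ≠ 0 := pow_ne_zero 2 hσ
  set u := t ^ 2 / σ ^ 2
  have hu : 0 ≤ u := by positivity
  have ht2 : t ^ 2 = σ ^ 2 * u := (mul_div_cancel₀ _ hσ2).symm
  have hloss : corrLoss σ t = σ ^ 2 * (1 - Real.exp (-u)) := corrLoss_eq σ t
  calc t ^ 2 - corrLoss σ t = σ ^ 2 * (Real.exp (-u) - (1 - u)) := by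
        rw [hloss, ht2]; ring
    _ ≤ σ ^ 2 * (u ^ 2 / 2) := by
        gcongr; linarith [Real.exp_neg_le_one_sub_add_sq_div_two hu]
    _ = t ^ 4 / (2 * σ ^ 2) := by
        rw [show t ^ 4 = (t ^ 2) ^ 2 by ring, ht2]; field_simp

section Risk

variable {Ω : Type*} [MeasurableSpace Ω] {μ : Measure Ω} {X : Ω → ℝ}

lemma integrable_corrLoss_comp (σ : ℝ) (hX : AEStronglyMeasurable X μ)
    (hX2 : Integrable (fun ω => X ω ^ 2) μ) : Integrable (fun ω => corrLoss σ (X ω)) μ :=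
  hX2.mono' ((continuous_corrLoss σ).comp_aestronglyMeasurable hX) <| ae_of_all _ fun ω => by
    rw [Real.norm_of_nonneg (corrLoss_nonneg σ (X ω))]
    exact corrLoss_le_sq σ (X ω)

lemma integral_corrLoss_le_integral_sq (σ : ℝ) (hX : AEStronglyMeasurable X μ)
    (hX2 : Integrable (fun ω => X ω ^ 2) μ) :
    ∫ ω, corrLoss σ (X ω) ∂μ ≤ ∫ ω, X ω ^ 2 ∂μ :=
  integral_mono (integrable_corrLoss_comp σ hX hX2) hX2 fun ω => corrLoss_le_sq σ (X ω)

lemma integral_sq_sub_integral_corrLoss_le {σ : ℝ} (hσ : σ ≠ 0) (hX : AEStronglyMeasurable X μ)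
    (hX2 : Integrable (fun ω => X ω ^ 2) μ) (hX4 : Integrable (fun ω => X ω ^ 4) μ) :
    (∫ ω, X ω ^ 2 ∂μ) - ∫ ω, corrLoss σ (X ω) ∂μ ≤ (∫ ω, X ω ^ 4 ∂μ) / (2 * σ ^ 2) := by
  rw [← integral_sub hX2 (integrable_corrLoss_comp σ hX hX2), ← integral_div]
  exact integral_mono (hX2.sub (integrable_corrLoss_comp σ hX hX2)) (hX4.div_const _)
    fun ω => sq_sub_corrLoss_le hσ (X ω)

lemma abs_integral_corrLoss_sub_integral_sq_le {σ : ℝ} (hσ : σ ≠ 0)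
    (hX : AEStronglyMeasurable X μ) (hX2 : Integrable (fun ω => X ω ^ 2) μ)
    (hX4 : Integrable (fun ω => X ω ^ 4) μ) :
    |(∫ ω, corrLoss σ (X ω) ∂μ) - ∫ ω, X ω ^ 2 ∂μ| ≤ (∫ ω, X ω ^ 4 ∂μ) / (2 * σ ^ 2) := by
  rw [abs_sub_comm, abs_of_nonneg (sub_nonneg.2 (integral_corrLoss_le_integral_sq σ hX hX2))]
  exact integral_sq_sub_integral_corrLoss_le hσ hX hX2 hX4

lemma memLp_four_of_integrable_pow_four (hX : AEStronglyMeasurable X μ)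
    (hX4 : Integrable (fun ω => X ω ^ 4) μ) : MemLp X 4 μ := by
  refine (integrable_norm_rpow_iff hX (by norm_num) (by norm_num)).1 ?_
  simpa [Real.norm_eq_abs, Even.pow_abs ⟨2, rfl⟩] using hX4

lemma MemLp.integrable_pow_four (hX : MemLp X 4 μ) : Integrable (fun ω => X ω ^ 4) μ := by
  simpa [Real.norm_eq_abs, Even.pow_abs ⟨2, rfl⟩] using hX.integrable_norm_pow (by norm_num)

end Risk

theorem corrLoss_risk_comparison_general (Ω : Type*) [MeasurableSpace Ω]
    (P : Measure Ω) [IsProbabilityMeasure P]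
    (Y : Ω → ℝ) (hY : Measurable Y)
    (hY4 : Integrable (fun ω => (Y ω)^4) P)
    (σ : ℝ) (hσ : 0 < σ) :
    (∀ a : ℝ,
      |(∫ ω, corrLoss σ (Y ω - a) ∂P) - ∫ ω, (Y ω - a)^2 ∂P|
        ≤ (∫ ω, (Y ω - a)^4 ∂P) / (2 * σ^2)) ∧
    (∀ (M a : ℝ),
      (∫ ω, (Y ω - (∫ ω', Y ω' ∂P))^4 ∂P) ≤ M →
      (∀ b : ℝ, (∫ ω, corrLoss σ (Y ω - a) ∂P) ≤ ∫ ω, corrLoss σ (Y ω - b) ∂P) →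
      (∫ ω, (Y ω - a)^2 ∂P) - (∫ ω, (Y ω - (∫ ω', Y ω' ∂P))^2 ∂P)
        ≤ (∫ ω, (Y ω - a)^4 ∂P) / (2 * σ^2)) := by
  have hLp : ∀ a : ℝ, MemLp (fun ω => Y ω - a) 4 P := fun a =>
    (memLp_four_of_integrable_pow_four hY.aestronglyMeasurable hY4).sub (memLp_const a)
  have h2 : ∀ a : ℝ, Integrable (fun ω => (Y ω - a) ^ 2) P := fun a =>
    ((hLp a).mono_exponent (by norm_num)).integrable_sq
  have h4 : ∀ a : ℝ, Integrable (fun ω => (Y ω - a) ^ 4) P := fun a =>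
    MemLp.integrable_pow_four (hLp a)
  refine ⟨fun a => abs_integral_corrLoss_sub_integral_sq_le hσ.ne' (hLp a).1 (h2 a) (h4 a),
    fun M a _ hmin => ?_⟩
  set m := ∫ ω, Y ω ∂P
  calc (∫ ω, (Y ω - a) ^ 2 ∂P) - ∫ ω, (Y ω - m) ^ 2 ∂P
      ≤ (∫ ω, (Y ω - a) ^ 2 ∂P) - ∫ ω, corrLoss σ (Y ω - a) ∂P :=
        sub_le_sub_left ((hmin m).trans (integral_corrLoss_le_integral_sq σ (hLp m).1 (h2 m))) _
    _ ≤ (∫ ω, (Y ω - a) ^ 4 ∂P) / (2 * σ ^ 2) :=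
        integral_sq_sub_integral_corrLoss_le hσ.ne' (hLp a).1 (h2 a) (h4 a)

theorem corrLoss_risk_comparison (Ω : Type*) [MeasurableSpace Ω]
    (P : Measure Ω) [IsProbabilityMeasure P]
    (Y : Ω → ℝ) (hY : Measurable Y)
    (hY1 : Integrable Y P) (hY2 : Integrable (fun ω => (Y ω)^2) P)
    (hY4 : Integrable (fun ω => (Y ω)^4) P)
    (σ : ℝ) (hσ : 0 < σ) :
    (∀ a : ℝ,
      |(∫ ω, corrLoss σ (Y ω - a) ∂P) - ∫ ω, (Y ω - a)^2 ∂P|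
        ≤ (∫ ω, (Y ω - a)^4 ∂P) / (2 * σ^2)) ∧
    (∀ (M a : ℝ),
      (∫ ω, (Y ω - (∫ ω', Y ω' ∂P))^4 ∂P) ≤ M →
      (∀ b : ℝ, (∫ ω, corrLoss σ (Y ω - a) ∂P) ≤ ∫ ω, corrLoss σ (Y ω - b) ∂P) →
      (∫ ω, (Y ω - a)^2 ∂P) - (∫ ω, (Y ω - (∫ ω', Y ω' ∂P))^2 ∂P)
        ≤ (∫ ω, (Y ω - a)^4 ∂P) / (2 * σ^2)) :=
  corrLoss_risk_comparison_general Ω P Y hY hY4 σ hσ
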